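/- Let (A, ∂, ℓ) be an ascending chain complex over a field κ such that each (A_k, ℓ_k) satisfies the best approximation property and the homology vanishes: ker ∂_k = im ∂_{k+1} for all k. Then there exist index sets 𝓘_k (k ∈ ℤ) and families (y^{k}_j)_{j ∈ 𝓘_k} of elements of A_k such that for every k the set {∂_{k+1} y^{k+1}_i : i ∈ 𝓘_{k+1}} ∪ {y^{k}_j : j ∈ 𝓘_k} is an ℓ_k-orthogonal basis of A_k. -/

import Mathlib

open scoped Classical

universe u v

/-- `ℓ` is a filtration function making `(V, ℓ)` a filtered vector space over `κ`. -/
def IsFiltrationFn (κ : Type u) [Field κ] {V : Type v} [AddCommGroup V] [Module κ V]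
    (ℓ : V → WithBot ℝ) : Prop :=
  (∀ v : V, ℓ v = ⊥ ↔ v = 0) ∧
    (∀ (c : κ) (v : V), c ≠ 0 → ℓ (c • v) = ℓ v) ∧
      ∀ v w : V, ℓ (v + w) ≤ max (ℓ v) (ℓ w)

/-- A subset `S ⊆ V ∖ {0}` is `ℓ`-orthogonal. -/
def IsOrthogonal (κ : Type u) [Field κ] {V : Type v} [AddCommGroup V] [Module κ V]
    (ℓ : V → WithBot ℝ) (S : Set V) : Prop :=
  (0 : V) ∉ S ∧
    ∀ T : Finset V, (T : Set V) ⊆ S → ∀ c : V → κ,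
      ℓ (∑ v ∈ T, c v • v) = (T.filter fun v => c v ≠ 0).sup ℓ

/-- The best approximation property of a filtered vector space `(V, ℓ)`. -/
def HasBestApprox (κ : Type u) [Field κ] {V : Type v} [AddCommGroup V] [Module κ V]
    (ℓ : V → WithBot ℝ) : Prop :=
  ∀ (W : Submodule κ V) (v : V), v ∉ W → ∃ w₀ ∈ W, ∀ w ∈ W, ℓ (v - w₀) ≤ ℓ (v - w)

/-- Transport along an equality of indices. -/
def castL (κ : Type u) [Field κ] {C : ℤ → Type v} [∀ k, AddCommGroup (C k)]
    [∀ k, Module κ (C k)] {i j : ℤ} (h : i = j) : C i →ₗ[κ] C j := by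
  subst h; exact LinearMap.id

/-- The boundary map `∂_{k+1} : C_{k+1} → C_k`, viewed as landing in `C_k`. -/
def bdryMap (κ : Type u) [Field κ] {C : ℤ → Type v} [∀ k, AddCommGroup (C k)]
    [∀ k, Module κ (C k)] (d : ∀ k : ℤ, C k →ₗ[κ] C (k - 1)) (k : ℤ) :
    C (k + 1) →ₗ[κ] C k :=
  (castL κ (show k + 1 - 1 = k by omega)).comp (d (k + 1))

/-- `(C, d, ℓ)` is an ascending chain complex over `κ`. -/
def IsAscendingComplex (κ : Type u) [Field κ] {C : ℤ → Type v} [∀ k, AddCommGroup (C k)]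
    [∀ k, Module κ (C k)] (d : ∀ k : ℤ, C k →ₗ[κ] C (k - 1))
    (ℓ : ∀ k : ℤ, C k → WithBot ℝ) : Prop :=
  (∀ (k : ℤ) (x : C k), d (k - 1) (d k x) = 0) ∧
    (∀ k : ℤ, IsFiltrationFn κ (ℓ k)) ∧
      ∀ (k : ℤ) (x : C k), ℓ (k - 1) (d k x) ≤ ℓ k x


/-!
In each degree apply the following to `f = ∂_k : A_k → A_{k-1}`. The image `range f` carries two
filtrations with the best approximation property: the restriction of `ℓ_{k-1}` and the quotient
filtration `μ b = min {ℓ_k a | f a = b}`. A Zorn argument produces a basis of `range f` orthogonal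
for both; the invariant asks the set to be `μ`-orthogonal and, on each `μ`-level `t`, to be
`ℓ`-orthogonal and `ℓ`-orthogonal to `{μ < t}`. A maximal such set spans: a vector `v` of minimal
level `t` modulo its span, corrected by an `ℓ`-best approximation in
`span (level-t part) ⊔ {μ < t}`, could be added. Minimal lifts `y^k` of this basis are then
`ℓ_k`-orthogonal and `ℓ_k`-orthogonal to `ker ∂_k = im ∂_{k+1}`, which is spanned by the
orthogonal family `∂ y^{k+1}`; so `∂ y^{k+1} ∪ y^k` is an orthogonal basis of `A_k`.
-/

section Filtration

variable {κ : Type u} [Field κ] {V : Type v} [AddCommGroup V] [Module κ V]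
  {ℓ : V → WithBot ℝ}

namespace IsFiltrationFn

lemma map_zero (hℓ : IsFiltrationFn κ ℓ) : ℓ 0 = ⊥ := (hℓ.1 0).2 rfl

lemma ne_bot (hℓ : IsFiltrationFn κ ℓ) {v : V} (hv : v ≠ 0) : ℓ v ≠ ⊥ :=
  fun h => hv ((hℓ.1 v).1 h)

lemma map_smul (hℓ : IsFiltrationFn κ ℓ) {c : κ} (hc : c ≠ 0) (v : V) : ℓ (c • v) = ℓ v :=
  hℓ.2.1 c v hc

lemma map_add_le (hℓ : IsFiltrationFn κ ℓ) (v w : V) : ℓ (v + w) ≤ max (ℓ v) (ℓ w) :=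
  hℓ.2.2 v w

lemma map_neg (hℓ : IsFiltrationFn κ ℓ) (v : V) : ℓ (-v) = ℓ v := by
  simpa using hℓ.map_smul (neg_ne_zero.2 one_ne_zero) v

lemma map_sub_le (hℓ : IsFiltrationFn κ ℓ) (v w : V) : ℓ (v - w) ≤ max (ℓ v) (ℓ w) := by
  simpa [sub_eq_add_neg, hℓ.map_neg] using hℓ.map_add_le v (-w)

lemma map_add_eq_left_of_lt (hℓ : IsFiltrationFn κ ℓ) {v w : V} (h : ℓ w < ℓ v) :
    ℓ (v + w) = ℓ v := by
  refine le_antisymm ((hℓ.map_add_le v w).trans (max_le le_rfl h.le)) ?_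
  have := hℓ.map_sub_le (v + w) w
  rw [add_sub_cancel_right] at this
  exact (le_max_iff.1 this).resolve_right h.not_ge

lemma map_add_eq_max_of_le (hℓ : IsFiltrationFn κ ℓ) {v w : V} (h : ℓ v ≤ ℓ (v + w)) :
    ℓ (v + w) = max (ℓ v) (ℓ w) := by
  rcases le_or_gt (ℓ w) (ℓ v) with hwv | hvw
  · rw [max_eq_left hwv]
    exact le_antisymm ((hℓ.map_add_le v w).trans (max_le le_rfl hwv)) h
  · rw [max_eq_right hvw.le, add_comm]
    exact hℓ.map_add_eq_left_of_lt hvw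

lemma map_sum_smul_le (hℓ : IsFiltrationFn κ ℓ) {ι : Type*} (s : Finset ι) (c : ι → κ)
    (v : ι → V) :
    ℓ (∑ i ∈ s, c i • v i) ≤ s.sup (ℓ ∘ v) := by
  induction s using Finset.cons_induction with
  | empty => simp [hℓ.map_zero]
  | cons i s hi ih =>
    rw [Finset.sum_cons, Finset.sup_cons]
    refine (hℓ.map_add_le _ _).trans (max_le_max ?_ ih)
    by_cases hc : c i = 0
    · simp [hc, hℓ.map_zero]
    · rw [hℓ.map_smul hc]; rfl

lemma comp_subtype (hℓ : IsFiltrationFn κ ℓ) (p : Submodule κ V) :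
    IsFiltrationFn κ (ℓ ∘ p.subtype) :=
  ⟨fun v => by simp [hℓ.1], fun c v hc => hℓ.map_smul hc (v : V), fun v w => hℓ.map_add_le v w⟩

end IsFiltrationFn

lemma HasBestApprox.exists_forall_le (hba : HasBestApprox κ ℓ) (hℓ : IsFiltrationFn κ ℓ)
    (W : Submodule κ V) (v : V) : ∃ w₀ ∈ W, ∀ w ∈ W, ℓ (v - w₀) ≤ ℓ (v - w) := by
  by_cases hv : v ∈ W
  · exact ⟨v, hv, fun w _ => by simp [hℓ.map_zero]⟩
  · exact hba W v hv

lemma HasBestApprox.comp_subtype (hba : HasBestApprox κ ℓ) (p : Submodule κ V) :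
    HasBestApprox κ (ℓ ∘ p.subtype) := by
  intro W v hv
  obtain ⟨w₀, hw₀, hmin⟩ := hba (W.map p.subtype) v (by simpa using hv)
  obtain ⟨w₀, hw₀', rfl⟩ := Submodule.mem_map.1 hw₀
  exact ⟨w₀, hw₀', fun w hw => hmin w (Submodule.mem_map_of_mem hw)⟩

end Filtration

section OrthogonalFamily

def IsOrthogonalFamily (κ : Type u) [Field κ] {V : Type v} [AddCommGroup V] [Module κ V]
    (ℓ : V → WithBot ℝ) {ι : Type*} (v : ι → V) : Prop :=
  (∀ i, v i ≠ 0) ∧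
    ∀ (s : Finset ι) (c : ι → κ), (∀ i ∈ s, c i ≠ 0) → ℓ (∑ i ∈ s, c i • v i) = s.sup (ℓ ∘ v)

variable {κ : Type u} [Field κ] {V : Type v} [AddCommGroup V] [Module κ V]
  {ℓ : V → WithBot ℝ} {ι ι' : Type*}

def IsOrthogonalSubmodules (ℓ : V → WithBot ℝ) (U W : Submodule κ V) : Prop :=
  ∀ u ∈ U, ∀ w ∈ W, ℓ (u + w) = max (ℓ u) (ℓ w)

lemma exists_finset_sum_eq_of_mem_span_range {v : ι → V} {u : V}
    (hu : u ∈ Submodule.span κ (Set.range v)) :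
    ∃ (s : Finset ι) (c : ι → κ), (∀ i ∈ s, c i ≠ 0) ∧ ∑ i ∈ s, c i • v i = u := by
  obtain ⟨c, rfl⟩ := Finsupp.mem_span_range_iff_exists_finsupp.1 hu
  exact ⟨c.support, c, fun i hi => Finsupp.mem_support_iff.1 hi, rfl⟩

lemma isOrthogonalFamily_subtype_val {X : Set V} (h0 : (0 : V) ∉ X)
    (h : ∀ T : Finset V, ↑T ⊆ X → ∀ c : V → κ, (∀ x ∈ T, c x ≠ 0) →
      ℓ (∑ x ∈ T, c x • x) = T.sup ℓ) :
    IsOrthogonalFamily κ ℓ (Subtype.val : X → V) := by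
  refine ⟨fun x hx => h0 (hx ▸ x.2), fun s c hc => ?_⟩
  set c' : V → κ := fun v => if hv : v ∈ X then c ⟨v, hv⟩ else 0
  have hc' : ∀ i : X, c' i = c i := fun i => dif_pos i.2
  have := h (s.map (Function.Embedding.subtype _))
    (fun x hx => by obtain ⟨i, -, rfl⟩ := Finset.mem_map.1 hx; exact i.2) c'
    (fun x hx => by obtain ⟨i, hi, rfl⟩ := Finset.mem_map.1 hx; simpa [hc'] using hc i hi)
  simpa [Finset.sum_map, Finset.sup_map, hc'] using this

namespace IsOrthogonalFamily

variable {v : ι → V}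

lemma map_sum_eq_sup (hv : IsOrthogonalFamily κ ℓ v) (s : Finset ι) (c : ι → κ) :
    ℓ (∑ i ∈ s, c i • v i) = (s.filter (c · ≠ 0)).sup (ℓ ∘ v) := by
  rw [← hv.2 _ c fun i hi => (Finset.mem_filter.1 hi).2,
    Finset.sum_filter_of_ne (p := (c · ≠ 0)) fun i _ h hc => h (by rw [hc, zero_smul])]

lemma linearIndependent (hℓ : IsFiltrationFn κ ℓ) (hv : IsOrthogonalFamily κ ℓ v) :
    LinearIndependent κ v := by
  refine linearIndependent_iff'.2 fun s c hsum i hi => by_contra fun hci => ?_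
  have hsup := hv.map_sum_eq_sup s c
  rw [hsum, hℓ.map_zero] at hsup
  refine hℓ.ne_bot (hv.1 i) (le_bot_iff.1 ?_)
  exact hsup ▸ Finset.le_sup (f := ℓ ∘ v) (Finset.mem_filter.2 ⟨hi, hci⟩)

lemma isOrthogonal_range (hℓ : IsFiltrationFn κ ℓ) (hv : IsOrthogonalFamily κ ℓ v) :
    IsOrthogonal κ ℓ (Set.range v) := by
  have hinj := (hv.linearIndependent hℓ).injective
  refine ⟨fun ⟨i, hi⟩ => hv.1 i hi, fun T hT c => ?_⟩
  obtain ⟨s, -, rfl⟩ := Finset.subset_set_image_iff.1 (Set.image_univ ▸ hT)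
  rw [Finset.sum_image hinj.injOn, Finset.filter_image, Finset.sup_image]
  exact hv.map_sum_eq_sup s (c ∘ v)

lemma sum_elim {z : ι' → V} (hz : IsOrthogonalFamily κ ℓ z) (hv : IsOrthogonalFamily κ ℓ v)
    (hzv : IsOrthogonalSubmodules ℓ (Submodule.span κ (Set.range z))
      (Submodule.span κ (Set.range v))) :
    IsOrthogonalFamily κ ℓ (Sum.elim z v) := by
  refine ⟨Sum.forall.2 ⟨hz.1, hv.1⟩, fun s c hc => ?_⟩
  rw [Finset.sum_sum_eq_sum_toLeft_add_sum_toRight, ← s.toLeft_disjSum_toRight,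
    Finset.sup_disjSum, Finset.toLeft_disjSum, Finset.toRight_disjSum]
  simp only [Sum.elim_inl, Sum.elim_inr]
  rw [hzv _ (Submodule.sum_smul_mem _ _ fun i _ => Submodule.subset_span ⟨i, rfl⟩)
      _ (Submodule.sum_smul_mem _ _ fun i _ => Submodule.subset_span ⟨i, rfl⟩),
    hz.2 _ _ fun i hi => hc _ (Finset.mem_toLeft.1 hi),
    hv.2 _ _ fun i hi => hc _ (Finset.mem_toRight.1 hi)]
  rfl

lemma map {W : Type*} [AddCommGroup W] [Module κ W] {ℓ' : W → WithBot ℝ}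
    (hv : IsOrthogonalFamily κ ℓ v) (g : V →ₗ[κ] W) (hg : Function.Injective g)
    (hgℓ : ∀ x, ℓ' (g x) = ℓ x) : IsOrthogonalFamily κ ℓ' (g ∘ v) := by
  have hcomp : ℓ' ∘ (g ∘ v) = ℓ ∘ v := funext fun i => hgℓ (v i)
  refine ⟨fun i h => hv.1 i (hg (h.trans g.map_zero.symm)), fun s c hc => ?_⟩
  simp only [Function.comp_apply, ← map_smul]
  rw [← map_sum, hgℓ, hcomp]
  exact hv.2 s c hc

end IsOrthogonalFamily

end OrthogonalFamily

section QuotientFiltration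

variable {κ : Type u} [Field κ] {A : Type v} {C : Type*} [AddCommGroup A] [Module κ A]
  [AddCommGroup C] [Module κ C] {ℓ : A → WithBot ℝ}

lemma exists_minimal_preimage (f : A →ₗ[κ] C) (hℓ : IsFiltrationFn κ ℓ)
    (hba : HasBestApprox κ ℓ) (b : LinearMap.range f) :
    ∃ a, f.rangeRestrict a = b ∧ ∀ a', f.rangeRestrict a' = b → ℓ a ≤ ℓ a' := by
  obtain ⟨a, ha⟩ := f.surjective_rangeRestrict b
  obtain ⟨w₀, hw₀, hmin⟩ := hba.exists_forall_le hℓ (LinearMap.ker f.rangeRestrict) a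
  refine ⟨a - w₀, by rw [map_sub, ha, LinearMap.mem_ker.1 hw₀, sub_zero], fun a' ha' => ?_⟩
  simpa using hmin (a - a') (by rw [LinearMap.mem_ker, map_sub, ha, ha', sub_self])

noncomputable def minimalLift (f : A →ₗ[κ] C) (hℓ : IsFiltrationFn κ ℓ)
    (hba : HasBestApprox κ ℓ) (b : LinearMap.range f) : A :=
  (exists_minimal_preimage f hℓ hba b).choose

/-- The quotient filtration of `A ⧸ ker f`, carried by `range f`. -/
noncomputable def quotientFiltration (f : A →ₗ[κ] C) (hℓ : IsFiltrationFn κ ℓ)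
    (hba : HasBestApprox κ ℓ) (b : LinearMap.range f) : WithBot ℝ :=
  ℓ (minimalLift f hℓ hba b)

variable (f : A →ₗ[κ] C) (hℓ : IsFiltrationFn κ ℓ) (hba : HasBestApprox κ ℓ)

lemma rangeRestrict_minimalLift (b : LinearMap.range f) :
    f.rangeRestrict (minimalLift f hℓ hba b) = b :=
  (exists_minimal_preimage f hℓ hba b).choose_spec.1

lemma quotientFiltration_le {a : A} {b : LinearMap.range f} (h : f.rangeRestrict a = b) :
    quotientFiltration f hℓ hba b ≤ ℓ a :=
  (exists_minimal_preimage f hℓ hba b).choose_spec.2 a h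

lemma isFiltrationFn_quotientFiltration : IsFiltrationFn κ (quotientFiltration f hℓ hba) := by
  set m := minimalLift f hℓ hba
  have hm := rangeRestrict_minimalLift f hℓ hba
  refine ⟨fun b => ⟨fun h => ?_, fun h => ?_⟩, fun c b hc => le_antisymm ?_ ?_, fun b b' => ?_⟩
  · rw [← hm b, (hℓ.1 _).1 h, map_zero]
  · subst h
    exact le_bot_iff.1 ((quotientFiltration_le f hℓ hba (map_zero _)).trans_eq hℓ.map_zero)
  · refine (quotientFiltration_le f hℓ hba (a := c • m b) ?_).trans_eq (hℓ.map_smul hc _)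
    rw [map_smul, hm]
  · refine (quotientFiltration_le f hℓ hba (a := c⁻¹ • m (c • b)) ?_).trans_eq
      (hℓ.map_smul (inv_ne_zero hc) _)
    rw [map_smul, hm, inv_smul_smul₀ hc]
  · refine (quotientFiltration_le f hℓ hba (a := m b + m b') ?_).trans (hℓ.map_add_le _ _)
    rw [map_add, hm, hm]

lemma hasBestApprox_quotientFiltration : HasBestApprox κ (quotientFiltration f hℓ hba) := by
  intro W v hv
  obtain ⟨a, ha⟩ := f.surjective_rangeRestrict v
  obtain ⟨a₀, ha₀, hmin⟩ := hba (W.comap f.rangeRestrict) a (by simpa [ha] using hv)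
  refine ⟨f.rangeRestrict a₀, ha₀, fun w hw => ?_⟩
  calc quotientFiltration f hℓ hba (v - f.rangeRestrict a₀) ≤ ℓ (a - a₀) :=
        quotientFiltration_le f hℓ hba (by rw [map_sub, ha])
    _ ≤ ℓ (a - (a - minimalLift f hℓ hba (v - w))) :=
        hmin _ (by simpa [ha, rangeRestrict_minimalLift] using hw)
    _ = quotientFiltration f hℓ hba (v - w) := by rw [sub_sub_cancel]; rfl

lemma IsOrthogonalFamily.minimalLift_comp {ι : Type*} {b : ι → LinearMap.range f}
    (hb : IsOrthogonalFamily κ (quotientFiltration f hℓ hba) b) :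
    IsOrthogonalFamily κ ℓ (minimalLift f hℓ hba ∘ b) ∧
      IsOrthogonalSubmodules ℓ (LinearMap.ker f)
        (Submodule.span κ (Set.range (minimalLift f hℓ hba ∘ b))) := by
  set y := minimalLift f hℓ hba ∘ b
  have key : ∀ (s : Finset ι) (c : ι → κ), (∀ i ∈ s, c i ≠ 0) → ∀ w ∈ LinearMap.ker f,
      ℓ (∑ i ∈ s, c i • y i) = s.sup (ℓ ∘ y) ∧
        ℓ (∑ i ∈ s, c i • y i) ≤ ℓ (∑ i ∈ s, c i • y i + w) := by
    intro s c hc w hw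
    have hrr : f.rangeRestrict (∑ i ∈ s, c i • y i) = ∑ i ∈ s, c i • b i := by
      simp only [map_sum, map_smul, y, Function.comp_apply, rangeRestrict_minimalLift]
    have hlev : quotientFiltration f hℓ hba (∑ i ∈ s, c i • b i) = s.sup (ℓ ∘ y) := hb.2 s c hc
    have hle : ℓ (∑ i ∈ s, c i • y i) ≤ s.sup (ℓ ∘ y) := hℓ.map_sum_smul_le s c y
    refine ⟨le_antisymm hle (hlev ▸ quotientFiltration_le f hℓ hba hrr), hle.trans ?_⟩
    refine hlev ▸ quotientFiltration_le f hℓ hba ?_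
    rw [map_add, hrr, show f.rangeRestrict w = 0 from Subtype.ext hw, add_zero]
  refine ⟨⟨fun i h => hb.1 i ?_, fun s c hc => (key s c hc 0 (zero_mem _)).1⟩, ?_⟩
  · rw [← rangeRestrict_minimalLift f hℓ hba (b i)]
    exact (congrArg f.rangeRestrict h).trans (map_zero _)
  intro w hw u hu
  obtain ⟨s, c, hc, rfl⟩ := exists_finset_sum_eq_of_mem_span_range hu
  rw [add_comm, hℓ.map_add_eq_max_of_le (key s c hc w hw).2, max_comm]

end QuotientFiltration

section Biorthogonal

def IsLevelwiseBiorthogonal (κ : Type u) [Field κ] {V : Type v} [AddCommGroup V] [Module κ V]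
    (ℓ μ : V → WithBot ℝ) (X : Set V) : Prop :=
  0 ∉ X ∧ ∀ (t : ℝ) (T : Finset V), ↑T ⊆ X → (∀ x ∈ T, μ x = t) →
    ∀ c : V → κ, (∀ x ∈ T, c x ≠ 0) →
      μ (∑ x ∈ T, c x • x) = T.sup μ ∧ ℓ (∑ x ∈ T, c x • x) = T.sup ℓ ∧
        ∀ q, μ q < t → ℓ (∑ x ∈ T, c x • x) ≤ ℓ (∑ x ∈ T, c x • x + q)

variable {κ : Type u} [Field κ] {V : Type v} [AddCommGroup V] [Module κ V]
  {ℓ μ : V → WithBot ℝ} {X : Set V}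

def sublevel (hμ : IsFiltrationFn κ μ) (t : ℝ) : Submodule κ V where
  carrier := {v | μ v ≤ t}
  add_mem' ha hb := (hμ.map_add_le _ _).trans (max_le ha hb)
  zero_mem' := by simp [hμ.map_zero]
  smul_mem' c v hv := by
    by_cases hc : c = 0
    · simp [hc, hμ.map_zero]
    · simpa [hμ.map_smul hc] using hv

def strictSublevel (hμ : IsFiltrationFn κ μ) (t : ℝ) : Submodule κ V where
  carrier := {v | μ v < t}
  add_mem' ha hb := (hμ.map_add_le _ _).trans_lt (max_lt ha hb)
  zero_mem' := by simp [hμ.map_zero]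
  smul_mem' c v hv := by
    by_cases hc : c = 0
    · simp [hc, hμ.map_zero]
    · simpa [hμ.map_smul hc] using hv

lemma isLevelwiseBiorthogonal_empty (hℓ : IsFiltrationFn κ ℓ) (hμ : IsFiltrationFn κ μ) :
    IsLevelwiseBiorthogonal κ ℓ μ ∅ := by
  refine ⟨Set.notMem_empty 0, fun t T hT => ?_⟩
  obtain rfl : T = ∅ := Finset.coe_eq_empty.1 (Set.subset_empty_iff.1 hT)
  simp [hℓ.map_zero, hμ.map_zero]

/-- The vector is `v` minus an `ℓ`-best approximation of `v` in
`span (X ∩ μ⁻¹ t) ⊔ {μ < t}`. -/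
lemma exists_levelwise_orthogonal_vector (hℓ : IsFiltrationFn κ ℓ) (hμ : IsFiltrationFn κ μ)
    (hba : HasBestApprox κ ℓ) {v : V} {t : ℝ} (hvt : μ v = t)
    (hv : ∀ w ∈ Submodule.span κ X, μ v ≤ μ (v + w)) :
    ∃ x, μ x = t ∧ (∀ w ∈ Submodule.span κ X, (t : WithBot ℝ) ≤ μ (x + w)) ∧
      ∀ w ∈ Submodule.span κ {y ∈ X | μ y = t} ⊔ strictSublevel hμ t, ℓ x ≤ ℓ (x + w) := by
  set W := Submodule.span κ {y ∈ X | μ y = t} ⊔ strictSublevel hμ t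
  obtain ⟨u₀, hu₀, hmin⟩ := hba.exists_forall_le hℓ W v
  obtain ⟨z₀, hz₀, q₀, hq₀, rfl⟩ := Submodule.mem_sup.1 hu₀
  have hz₀X : z₀ ∈ Submodule.span κ X := Submodule.span_mono (Set.sep_subset _ _) hz₀
  have hge : ∀ w ∈ Submodule.span κ X, (t : WithBot ℝ) ≤ μ (v - (z₀ + q₀) + w) := by
    intro w hw
    have hvw := hvt ▸ hv _ (Submodule.sub_mem _ hw hz₀X)
    rw [show v - (z₀ + q₀) + w = v + (w - z₀) + -q₀ by abel,
      hμ.map_add_eq_left_of_lt (by rw [hμ.map_neg]; exact hq₀.trans_le hvw)]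
    exact hvw
  have hWt : W ≤ sublevel hμ t :=
    sup_le (Submodule.span_le.2 fun y hy => hy.2.le) fun q (hq : μ q < t) => hq.le
  refine ⟨v - (z₀ + q₀), le_antisymm ?_ (by simpa using hge 0 (zero_mem _)), hge, fun w hw => ?_⟩
  · exact (hμ.map_sub_le _ _).trans (max_le hvt.le (hWt hu₀))
  · simpa [sub_add] using hmin (z₀ + q₀ - w) (Submodule.sub_mem _ hu₀ hw)

namespace IsLevelwiseBiorthogonal

lemma map_sum_eq_sup (hℓ : IsFiltrationFn κ ℓ) (hμ : IsFiltrationFn κ μ)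
    (hX : IsLevelwiseBiorthogonal κ ℓ μ X) (T : Finset V) (hT : ↑T ⊆ X) (c : V → κ)
    (hc : ∀ x ∈ T, c x ≠ 0) :
    μ (∑ x ∈ T, c x • x) = T.sup μ ∧ ℓ (∑ x ∈ T, c x • x) = T.sup ℓ := by
  induction T using Finset.strongInduction with
  | H T ih =>
  rcases T.eq_empty_or_nonempty with rfl | hne
  · simp [hℓ.map_zero, hμ.map_zero]
  obtain ⟨x₀, hx₀, hsup⟩ := Finset.exists_mem_eq_sup T hne μ
  obtain ⟨t, ht⟩ := WithBot.ne_bot_iff_exists.1 (hμ.ne_bot fun h => hX.1 (h ▸ hT hx₀))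
  rw [← ht] at hsup
  set T₁ := T.filter (μ · = t)
  set T₂ := T.filter (μ · ≠ t)
  have hx₀₁ : x₀ ∈ T₁ := Finset.mem_filter.2 ⟨hx₀, ht.symm⟩
  have hT₂ : T₂ ⊂ T := Finset.filter_ssubset.2 ⟨x₀, hx₀, not_not.2 ht.symm⟩
  obtain ⟨hμ₂, hℓ₂⟩ :=
    ih T₂ hT₂ ((Finset.coe_subset.2 hT₂.1).trans hT) fun x hx => hc x (hT₂.1 hx)
  obtain ⟨hμ₁, hℓ₁, hperp⟩ :=
    hX.2 t T₁ ((Finset.coe_subset.2 (Finset.filter_subset _ _)).trans hT)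
    (fun x hx => (Finset.mem_filter.1 hx).2) c fun x hx => hc x (Finset.filter_subset _ _ hx)
  have hT₁sup : T₁.sup μ = t :=
    le_antisymm (Finset.sup_le fun x hx => (Finset.mem_filter.1 hx).2.le)
      (ht.trans_le (Finset.le_sup hx₀₁))
  have hlt : μ (∑ x ∈ T₂, c x • x) < t := by
    rw [hμ₂, Finset.sup_lt_iff (WithBot.bot_lt_coe t)]
    exact fun x hx => lt_of_le_of_ne (hsup ▸ Finset.le_sup (Finset.filter_subset _ _ hx))
      (Finset.mem_filter.1 hx).2
  rw [← Finset.sum_filter_add_sum_filter_not T (μ · = t)]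
  constructor
  · rw [hμ.map_add_eq_left_of_lt (by rwa [hμ₁, hT₁sup]), hμ₁, hT₁sup, hsup]
  · rw [hℓ.map_add_eq_max_of_le (hperp _ hlt), hℓ₁, hℓ₂, ← Finset.sup_union,
      Finset.filter_union_filter_not_eq]

lemma map_smul_add_sum (hℓ : IsFiltrationFn κ ℓ) (hμ : IsFiltrationFn κ μ)
    (hX : IsLevelwiseBiorthogonal κ ℓ μ X) {x : V} {t : ℝ} (hxt : μ x = t)
    (hxμ : ∀ w ∈ Submodule.span κ X, (t : WithBot ℝ) ≤ μ (x + w))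
    (hxℓ : ∀ w ∈ Submodule.span κ {y ∈ X | μ y = t} ⊔ strictSublevel hμ t, ℓ x ≤ ℓ (x + w))
    {T : Finset V} (hT : ↑T ⊆ {y ∈ X | μ y = t}) {c : V → κ} (hc : ∀ y ∈ T, c y ≠ 0)
    {a : κ} (ha : a ≠ 0) :
    μ (a • x + ∑ y ∈ T, c y • y) = t ∧
      ℓ (a • x + ∑ y ∈ T, c y • y) = max (ℓ x) (T.sup ℓ) ∧
      ∀ q, μ q < t → ℓ (a • x + ∑ y ∈ T, c y • y) ≤ ℓ (a • x + ∑ y ∈ T, c y • y + q) := by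
  obtain ⟨-, hℓT, hperpT⟩ :=
    hX.2 t T (fun y hy => (hT hy).1) (fun y hy => (hT hy).2) c hc
  set s := ∑ y ∈ T, c y • y
  set w := a⁻¹ • s
  have hsum : ∀ r : V, a • x + s + r = a • (x + (w + a⁻¹ • r)) := fun r => by
    rw [smul_add, smul_add, smul_inv_smul₀ ha, smul_inv_smul₀ ha, add_assoc]
  have hsum₀ : a • x + s = a • (x + w) := by simpa using hsum 0
  have hw : w ∈ Submodule.span κ {y ∈ X | μ y = t} :=
    Submodule.smul_mem _ _ (Submodule.sum_smul_mem _ _ fun y hy => Submodule.subset_span (hT hy))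
  have hxw : ∀ r ∈ strictSublevel hμ t, ℓ (x + (w + r)) = max (ℓ x) (ℓ (w + r)) := fun r hr =>
    hℓ.map_add_eq_max_of_le (hxℓ _ (Submodule.add_mem _ (Submodule.mem_sup_left hw)
      (Submodule.mem_sup_right hr)))
  have hxw₀ : ℓ (x + w) = max (ℓ x) (ℓ s) := by
    simpa [w, hℓ.map_smul (inv_ne_zero ha)] using hxw 0 (zero_mem _)
  refine ⟨?_, by rw [hsum₀, hℓ.map_smul ha, hxw₀, hℓT], fun q hq => ?_⟩
  · have hwμ : μ w ≤ t := (Submodule.span_le.2 fun y hy => hy.2.le : _ ≤ sublevel hμ t) hw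
    rw [hsum₀, hμ.map_smul ha]
    exact le_antisymm ((hμ.map_add_le x w).trans (max_le hxt.le hwμ))
      (hxμ w (Submodule.span_mono (Set.sep_subset _ _) hw))
  · have hwq : ℓ (w + a⁻¹ • q) = ℓ (s + q) := by
      rw [← smul_add, hℓ.map_smul (inv_ne_zero ha)]
    rw [hsum q, hsum₀, hℓ.map_smul ha, hℓ.map_smul ha, hxw _ (Submodule.smul_mem _ _ hq), hxw₀,
      hwq]
    exact max_le_max le_rfl (hperpT q hq)

lemma insert (hℓ : IsFiltrationFn κ ℓ) (hμ : IsFiltrationFn κ μ)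
    (hX : IsLevelwiseBiorthogonal κ ℓ μ X) {x : V} {t : ℝ} (hxt : μ x = t)
    (hxμ : ∀ w ∈ Submodule.span κ X, (t : WithBot ℝ) ≤ μ (x + w))
    (hxℓ : ∀ w ∈ Submodule.span κ {y ∈ X | μ y = t} ⊔ strictSublevel hμ t, ℓ x ≤ ℓ (x + w)) :
    IsLevelwiseBiorthogonal κ ℓ μ (insert x X) := by
  refine ⟨fun h => h.elim (fun h0 => ?_) hX.1, fun t' T hT hTt c hc => ?_⟩
  · exact WithBot.bot_ne_coe (hμ.map_zero.symm.trans (h0 ▸ hxt))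
  by_cases hxT : x ∈ T
  swap
  · exact hX.2 t' T (fun y hy => (hT hy).resolve_left (ne_of_mem_of_not_mem hy hxT)) hTt c hc
  obtain rfl : t' = t := WithBot.coe_injective ((hTt x hxT).symm.trans hxt)
  have hT' : ↑(T.erase x) ⊆ {y ∈ X | μ y = t'} := fun y hy =>
    ⟨(hT (Finset.mem_of_mem_erase hy)).resolve_left (Finset.ne_of_mem_erase hy),
      hTt y (Finset.mem_of_mem_erase hy)⟩
  have hsup : ∀ g : V → WithBot ℝ, T.sup g = max (g x) ((T.erase x).sup g) := fun g => by
    rw [← Finset.sup_insert, Finset.insert_erase hxT]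
  obtain ⟨hμT, hℓT, hperpT⟩ := map_smul_add_sum hℓ hμ hX hxt hxμ hxℓ hT'
    (fun y hy => hc y (Finset.mem_of_mem_erase hy)) (hc x hxT)
  have hsum : c x • x + ∑ y ∈ T.erase x, c y • y = ∑ y ∈ T, c y • y :=
    Finset.add_sum_erase T (fun y => c y • y) hxT
  rw [hsum] at hμT hℓT hperpT
  refine ⟨?_, by rw [hℓT, hsup], hperpT⟩
  rw [hμT, hsup, hxt, max_eq_left (Finset.sup_le fun y hy => (hT' hy).2.le)]

lemma sUnion {S : Set (Set V)} (hS : ∀ X ∈ S, IsLevelwiseBiorthogonal κ ℓ μ X)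
    (hchain : IsChain (· ⊆ ·) S) (hne : S.Nonempty) :
    IsLevelwiseBiorthogonal κ ℓ μ (⋃₀ S) := by
  refine ⟨fun ⟨X, hX, h0⟩ => (hS X hX).1 h0, fun t T hT => ?_⟩
  obtain ⟨X, hX, hTX⟩ :=
    hchain.directedOn.exists_mem_subset_of_finite_of_subset_sUnion hne T.finite_toSet hT
  exact (hS X hX).2 t T hTX

lemma span_eq_top_of_maximal (hℓ : IsFiltrationFn κ ℓ)
    (hμ : IsFiltrationFn κ μ) (hbaℓ : HasBestApprox κ ℓ) (hbaμ : HasBestApprox κ μ)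
    (hX : Maximal (IsLevelwiseBiorthogonal κ ℓ μ) X) : Submodule.span κ X = ⊤ := by
  by_contra htop
  obtain ⟨v, -, hv⟩ := SetLike.exists_of_lt (lt_top_iff_ne_top.2 htop)
  obtain ⟨w₀, hw₀, hmin⟩ := hbaμ _ v hv
  have hv₀ : v - w₀ ≠ 0 := fun h => hv (by simpa [sub_eq_zero.1 h] using hw₀)
  obtain ⟨t, ht⟩ := WithBot.ne_bot_iff_exists.1 (hμ.ne_bot hv₀)
  obtain ⟨x, hxt, hxμ, hxℓ⟩ := exists_levelwise_orthogonal_vector hℓ hμ hbaℓ ht.symm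
    fun w hw => by simpa [sub_add] using hmin (w₀ - w) (Submodule.sub_mem _ hw₀ hw)
  have hxX : x ∈ X :=
    hX.2 (hX.1.insert hℓ hμ hxt hxμ hxℓ) (Set.subset_insert x X) (Set.mem_insert x X)
  have hbot := hxμ (-x) (Submodule.neg_mem _ (Submodule.subset_span hxX))
  rw [add_neg_cancel, hμ.map_zero] at hbot
  exact WithBot.coe_ne_bot (le_bot_iff.1 hbot)

end IsLevelwiseBiorthogonal

theorem exists_biorthogonal_basis (hℓ : IsFiltrationFn κ ℓ) (hμ : IsFiltrationFn κ μ)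
    (hbaℓ : HasBestApprox κ ℓ) (hbaμ : HasBestApprox κ μ) :
    ∃ (ι : Type v) (b : ι → V), IsOrthogonalFamily κ ℓ b ∧ IsOrthogonalFamily κ μ b ∧
      Submodule.span κ (Set.range b) = ⊤ := by
  obtain ⟨X, -, hX⟩ := zorn_subset_nonempty {X | IsLevelwiseBiorthogonal κ ℓ μ X}
    (fun S hS hchain hne => ⟨⋃₀ S, IsLevelwiseBiorthogonal.sUnion hS hchain hne,
      fun _ => Set.subset_sUnion_of_mem⟩) ∅ (isLevelwiseBiorthogonal_empty hℓ hμ)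
  have hsum := hX.1.map_sum_eq_sup hℓ hμ
  refine ⟨X, Subtype.val,
    isOrthogonalFamily_subtype_val hX.1.1 fun T hT c hc => (hsum T hT c hc).2,
    isOrthogonalFamily_subtype_val hX.1.1 fun T hT c hc => (hsum T hT c hc).1, ?_⟩
  rw [Subtype.range_coe]
  exact IsLevelwiseBiorthogonal.span_eq_top_of_maximal hℓ hμ hbaℓ hbaμ hX

end Biorthogonal

section Complex

variable {κ : Type u} [Field κ]

theorem exists_orthogonal_lifts {A C : Type v} [AddCommGroup A] [Module κ A]
    [AddCommGroup C] [Module κ C] (f : A →ₗ[κ] C) {ℓA : A → WithBot ℝ} {ℓC : C → WithBot ℝ}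
    (hℓA : IsFiltrationFn κ ℓA) (hℓC : IsFiltrationFn κ ℓC) (hbaA : HasBestApprox κ ℓA)
    (hbaC : HasBestApprox κ ℓC) :
    ∃ (ι : Type v) (y : ι → A), IsOrthogonalFamily κ ℓA y ∧ IsOrthogonalFamily κ ℓC (f ∘ y) ∧
      IsOrthogonalSubmodules ℓA (LinearMap.ker f) (Submodule.span κ (Set.range y)) ∧
      Submodule.span κ (Set.range (f ∘ y)) = LinearMap.range f ∧
      Codisjoint (Submodule.span κ (Set.range y)) (LinearMap.ker f) := by
  obtain ⟨ι, b, hbC, hbQ, hbspan⟩ := exists_biorthogonal_basis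
    (hℓC.comp_subtype _) (isFiltrationFn_quotientFiltration f hℓA hbaA)
    (hbaC.comp_subtype _) (hasBestApprox_quotientFiltration f hℓA hbaA)
  obtain ⟨hy, hperp⟩ := hbQ.minimalLift_comp f hℓA hbaA
  have hfy : f ∘ (minimalLift f hℓA hbaA ∘ b) = (LinearMap.range f).subtype ∘ b :=
    funext fun i => congrArg Subtype.val (rangeRestrict_minimalLift f hℓA hbaA (b i))
  have hspan : (Submodule.span κ (Set.range (minimalLift f hℓA hbaA ∘ b))).map f =
      LinearMap.range f := by
    rw [← Submodule.span_image, ← Set.range_comp, hfy, Set.range_comp, Submodule.span_image,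
      hbspan, Submodule.map_top, Submodule.range_subtype]
  refine ⟨ι, _, hy, hfy ▸ hbC.map _ Subtype.val_injective fun _ => rfl, hperp, ?_,
    Submodule.map_eq_range_iff.1 hspan⟩
  rwa [Set.range_comp, Submodule.span_image]

lemma apply_castL {C : ℤ → Type v} [∀ k, AddCommGroup (C k)] [∀ k, Module κ (C k)]
    (ℓ : ∀ k : ℤ, C k → WithBot ℝ) {i j : ℤ} (h : i = j) (x : C i) :
    ℓ j (castL κ h x) = ℓ i x := by
  subst h; rfl

lemma castL_injective {C : ℤ → Type v} [∀ k, AddCommGroup (C k)] [∀ k, Module κ (C k)]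
    {i j : ℤ} (h : i = j) : Function.Injective (castL κ (C := C) h) := by
  subst h; exact Function.injective_id

end Complex

/-- For an acyclic ascending chain complex `(A, ∂, ℓ)`, each degree satisfying the best
approximation property, there are families `y^k : 𝓘_k → A_k` so that for each `k` the
family `{∂ y^{k+1}_i} ∪ {y^k_j}` is an `ℓ_k`-orthogonal basis of `A_k`. -/
theorem exists_orthogonal_basis_adapted_to_differential (κ : Type u) [Field κ]
    {A : ℤ → Type v} [∀ k, AddCommGroup (A k)] [∀ k, Module κ (A k)]
    (d : ∀ k : ℤ, A k →ₗ[κ] A (k - 1)) (ℓ : ∀ k : ℤ, A k → WithBot ℝ)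
    (hA : IsAscendingComplex κ d ℓ) (hba : ∀ k : ℤ, HasBestApprox κ (ℓ k))
    (hacyclic : ∀ k : ℤ, LinearMap.ker (d k) = LinearMap.range (bdryMap κ d k)) :
    ∃ (I : ℤ → Type v) (y : ∀ k : ℤ, I k → A k),
      ∀ k : ℤ,
        LinearIndependent κ
          (Sum.elim (fun i : I (k + 1) => bdryMap κ d k (y (k + 1) i)) (y k)) ∧
        Submodule.span κ
          (Set.range (Sum.elim (fun i : I (k + 1) => bdryMap κ d k (y (k + 1) i)) (y k))) = ⊤ ∧
        IsOrthogonal κ (ℓ k)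
          (Set.range (Sum.elim (fun i : I (k + 1) => bdryMap κ d k (y (k + 1) i)) (y k))) := by
  choose I y hy hdy hperp hrange hcodisj using fun k : ℤ =>
    exists_orthogonal_lifts (d k) (hA.2.1 k) (hA.2.1 (k - 1)) (hba k) (hba (k - 1))
  refine ⟨I, y, fun k => ?_⟩
  have hk : k + 1 - 1 = k := by omega
  have hz : IsOrthogonalFamily κ (ℓ k) (fun i => bdryMap κ d k (y (k + 1) i)) :=
    (hdy (k + 1)).map _ (castL_injective hk) (apply_castL ℓ hk)
  have hzspan : Submodule.span κ (Set.range fun i => bdryMap κ d k (y (k + 1) i)) =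
      LinearMap.ker (d k) := by
    rw [hacyclic k, bdryMap, LinearMap.range_comp, ← hrange (k + 1), ← Submodule.span_image,
      ← Set.range_comp]
    rfl
  have hF := hz.sum_elim (hy k) (hzspan ▸ hperp k)
  refine ⟨hF.linearIndependent (hA.2.1 k), ?_, hF.isOrthogonal_range (hA.2.1 k)⟩
  rw [Set.Sum.elim_range, Submodule.span_union, hzspan, sup_comm]
  exact codisjoint_iff.1 (hcodisj k)
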